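/- arXiv:2303.03650 — 2 statements merged into one kernel-verified Lean document; each statement's English description precedes it below -/
import Mathlib

section
/- Existence and uniqueness of f- and f*-projection centroids: Let f : [0,∞) → [0,∞) be strictly convex with f(1) = 0, differentiable at 1 with f′(1) = 0, and let L₁, …, Lₙ ∈ ℒ⁺. Then the map ℒ(π) ∋ M ↦ Σ_{i=1}^n D_f(M||L_i) attains a unique minimum (the f-projection centroid), and the map ℒ⁺(π) ∋ M ↦ Σ_{i=1}^n D_f(L_i||M) attains a unique minimum (the f*-projection centroid). -/
open Finset

noncomputable section

variable {X : Type*} [Fintype X] [DecidableEq X]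

/-- Build a matrix with prescribed off-diagonal entries and diagonal entries
chosen so that every row sums to zero. -/
def rowZero (F : X → X → ℝ) : X → X → ℝ :=
  fun x y => if x = y then -(∑ z ∈ Finset.univ.erase x, F x z) else F x y

/-- `L` is a Markov infinitesimal generator: nonnegative off-diagonal entries
and zero row sums. -/
def IsGen (L : X → X → ℝ) : Prop :=
  (∀ x y, x ≠ y → 0 ≤ L x y) ∧ (∀ x, ∑ y, L x y = 0)

/-- `L` is a `π`-reversible Markov generator, i.e. `L ∈ ℒ(π)`. -/
def IsRev (π : X → ℝ) (L : X → X → ℝ) : Prop :=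
  IsGen L ∧ ∀ x y, π x * L x y = π y * L y x

/-- `π` is a probability distribution with full support. -/
def IsProb (π : X → ℝ) : Prop := (∀ x, 0 < π x) ∧ ∑ x, π x = 1

/-- The `π`-dual `L_π` of `L`: off-diagonal entries `π(y)L(y,x)/π(x)`,
diagonal entries make row sums zero. -/
def dual (π : X → ℝ) (L : X → X → ℝ) : X → X → ℝ :=
  rowZero (fun x y => π y * L y x / π x)

/-- The `f`-divergence between generators: `Df f π M L = D_f(M‖L)`.
(The convention `0·f(a/0) = 0` holds automatically since `a/0 = 0` and
the factor `L x y = 0` kills the term.) -/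
def Df (f : ℝ → ℝ) (π : X → ℝ) (M L : X → X → ℝ) : ℝ :=
  ∑ x, π x * ∑ y ∈ Finset.univ.erase x, L x y * f (M x y / L x y)

namespace CentroidAux

open Set Filter

variable {f : ℝ → ℝ}

lemma fpos (hconv : StrictConvexOn ℝ (Set.Ici (0:ℝ)) f) (hnonneg : ∀ t, 0 ≤ t → 0 ≤ f t)
    (hf1 : f 1 = 0) {t : ℝ} (ht : 0 ≤ t) (ht1 : t ≠ 1) : 0 < f t := by
  rcases lt_or_eq_of_le (hnonneg t ht) with h | h
  · exact h
  · exfalso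
    have h2 := hconv.2 (show t ∈ Set.Ici (0:ℝ) from ht)
      (show (1:ℝ) ∈ Set.Ici (0:ℝ) by norm_num) ht1 one_half_pos one_half_pos (by norm_num)
    have hmem : (0:ℝ) ≤ (1/2 : ℝ) * t + (1/2 : ℝ) * 1 := by nlinarith
    have h3 := hnonneg _ hmem
    simp only [smul_eq_mul] at h2
    rw [hf1, ← h] at h2
    nlinarith

lemma fdec (hconv : StrictConvexOn ℝ (Set.Ici (0:ℝ)) f) (hnonneg : ∀ t, 0 ≤ t → 0 ≤ f t)
    (hf1 : f 1 = 0) {u v : ℝ} (hu : 0 ≤ u) (huv : u < v) (hv : v ≤ 1) : f v < f u := by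
  rcases eq_or_lt_of_le hv with rfl | hv1
  · rw [hf1]; exact fpos hconv hnonneg hf1 hu (ne_of_lt huv)
  · have h1u : 0 < 1 - u := by linarith
    have ha : 0 < (1 - v)/(1 - u) := div_pos (by linarith) h1u
    have hb : 0 < (v - u)/(1 - u) := div_pos (by linarith) h1u
    have hab : (1 - v)/(1 - u) + (v - u)/(1 - u) = 1 := by
      rw [← add_div, div_eq_one_iff_eq h1u.ne']; ring
    have hval : ((1 - v)/(1 - u)) * u + ((v - u)/(1 - u)) * 1 = v := by
      rw [mul_one, div_mul_eq_mul_div, ← add_div, div_eq_iff h1u.ne']; ring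
    have hkey := hconv.2 (show u ∈ Set.Ici (0:ℝ) from hu)
      (show (1:ℝ) ∈ Set.Ici (0:ℝ) by norm_num) (by intro h; rw [h] at huv; linarith) ha hb hab
    simp only [smul_eq_mul, hval, hf1, mul_zero, add_zero] at hkey
    have ha1 : (1 - v)/(1 - u) < 1 := by rw [div_lt_one h1u]; linarith
    nlinarith [hnonneg u hu]

lemma fdec_le (hconv : StrictConvexOn ℝ (Set.Ici (0:ℝ)) f) (hnonneg : ∀ t, 0 ≤ t → 0 ≤ f t)
    (hf1 : f 1 = 0) {u v : ℝ} (hu : 0 ≤ u) (huv : u ≤ v) (hv : v ≤ 1) : f v ≤ f u := by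
  rcases eq_or_lt_of_le huv with rfl | h
  · exact le_rfl
  · exact (fdec hconv hnonneg hf1 hu h hv).le

lemma finc (hconv : StrictConvexOn ℝ (Set.Ici (0:ℝ)) f) (hnonneg : ∀ t, 0 ≤ t → 0 ≤ f t)
    (hf1 : f 1 = 0) {u v : ℝ} (hu : 1 ≤ u) (huv : u < v) : f u < f v := by
  rcases eq_or_lt_of_le hu with rfl | hu1
  · rw [hf1]; exact fpos hconv hnonneg hf1 (by linarith) (by intro h; rw [h] at huv; linarith)
  · have hv1 : 0 < v - 1 := by linarith
    have ha : 0 < (v - u)/(v - 1) := div_pos (by linarith) hv1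
    have hb : 0 < (u - 1)/(v - 1) := div_pos (by linarith) hv1
    have hab : (v - u)/(v - 1) + (u - 1)/(v - 1) = 1 := by
      rw [← add_div, div_eq_one_iff_eq hv1.ne']; ring
    have hval : ((v - u)/(v - 1)) * 1 + ((u - 1)/(v - 1)) * v = u := by
      rw [mul_one, div_mul_eq_mul_div, ← add_div, div_eq_iff hv1.ne']; ring
    have hkey := hconv.2 (show (1:ℝ) ∈ Set.Ici (0:ℝ) by norm_num)
      (show v ∈ Set.Ici (0:ℝ) from Set.mem_Ici.mpr (by linarith))
      (by intro h; rw [← h] at huv; linarith) ha hb hab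
    simp only [smul_eq_mul, hval, hf1, mul_zero, zero_add] at hkey
    have hb1 : (u - 1)/(v - 1) < 1 := by rw [div_lt_one hv1]; linarith
    nlinarith [hnonneg v (by linarith : (0:ℝ) ≤ v)]

lemma fratio (hconv : StrictConvexOn ℝ (Set.Ici (0:ℝ)) f) (hnonneg : ∀ t, 0 ≤ t → 0 ≤ f t)
    (hf1 : f 1 = 0) {u v : ℝ} (hu : 1 ≤ u) (huv : u < v) : f u * v < f v * u := by
  rcases eq_or_lt_of_le hu with rfl | hu1
  · rw [hf1, zero_mul, mul_one]
    exact fpos hconv hnonneg hf1 (by linarith) (by intro h; rw [h] at huv; linarith)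
  · have hv1 : 0 < v - 1 := by linarith
    have ha : 0 < (v - u)/(v - 1) := div_pos (by linarith) hv1
    have hb : 0 < (u - 1)/(v - 1) := div_pos (by linarith) hv1
    have hab : (v - u)/(v - 1) + (u - 1)/(v - 1) = 1 := by
      rw [← add_div, div_eq_one_iff_eq hv1.ne']; ring
    have hval : ((v - u)/(v - 1)) * 1 + ((u - 1)/(v - 1)) * v = u := by
      rw [mul_one, div_mul_eq_mul_div, ← add_div, div_eq_iff hv1.ne']; ring
    have hkey := hconv.2 (show (1:ℝ) ∈ Set.Ici (0:ℝ) by norm_num)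
      (show v ∈ Set.Ici (0:ℝ) from Set.mem_Ici.mpr (by linarith))
      (by intro h; rw [← h] at huv; linarith) ha hb hab
    simp only [smul_eq_mul, hval, hf1, mul_zero, zero_add] at hkey
    -- hkey : f u < (u-1)/(v-1) * f v
    have hfv : 0 ≤ f v := hnonneg v (by linarith)
    have hbv : ((u - 1)/(v - 1)) * v ≤ u := by
      rw [div_mul_eq_mul_div, div_le_iff₀ hv1]; nlinarith
    have hv0 : 0 < v := by linarith
    calc f u * v < (((u - 1)/(v - 1)) * f v) * v := by nlinarith
      _ = f v * (((u - 1)/(v - 1)) * v) := by ring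
      _ ≤ f v * u := by nlinarith

lemma fslope (hconv : StrictConvexOn ℝ (Set.Ici (0:ℝ)) f) {t : ℝ} (ht : 3 ≤ t) :
    f 2 + (f 3 - f 2) * (t - 2) ≤ f t := by
  rcases eq_or_lt_of_le ht with rfl | ht3
  · have : f 2 + (f 3 - f 2) * ((3:ℝ) - 2) = f 3 := by ring
    linarith
  · have ht2 : 0 < t - 2 := by linarith
    have ha : 0 ≤ (t - 3)/(t - 2) := le_of_lt (div_pos (by linarith) ht2)
    have hb : (0:ℝ) ≤ 1/(t - 2) := le_of_lt (div_pos one_pos ht2)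
    have hab : (t - 3)/(t - 2) + 1/(t - 2) = 1 := by
      rw [← add_div, div_eq_one_iff_eq ht2.ne']; ring
    have hval : ((t - 3)/(t - 2)) * 2 + (1/(t - 2)) * t = 3 := by
      rw [div_mul_eq_mul_div, div_mul_eq_mul_div, ← add_div, div_eq_iff ht2.ne']; ring
    have hkey := (hconv.convexOn).2 (show (2:ℝ) ∈ Set.Ici (0:ℝ) by norm_num)
      (show t ∈ Set.Ici (0:ℝ) from Set.mem_Ici.mpr (by linarith)) ha hb hab
    simp only [smul_eq_mul, hval] at hkey
    have hmul := mul_le_mul_of_nonneg_right hkey ht2.le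
    have expand : ((t - 3)/(t - 2) * f 2 + 1/(t - 2) * f t) * (t - 2)
        = (t - 3) * f 2 + f t := by field_simp <;> ring
    rw [expand] at hmul
    nlinarith [hmul]

lemma fcont (hconv : StrictConvexOn ℝ (Set.Ici (0:ℝ)) f) : ContinuousOn f (Set.Ioi (0:ℝ)) :=
  ConvexOn.continuousOn isOpen_Ioi
    ((hconv.convexOn).subset Set.Ioi_subset_Ici_self (convex_Ioi 0))

lemma minUnique {D : Set ℝ} {g : ℝ → ℝ} (hg : StrictConvexOn ℝ D g) {x y : ℝ}
    (hx : x ∈ D) (hy : y ∈ D) (hmx : ∀ t ∈ D, g x ≤ g t) (hmy : ∀ t ∈ D, g y ≤ g t) :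
    x = y := by
  by_contra hne
  have hmem : (1/2 : ℝ) • x + (1/2 : ℝ) • y ∈ D :=
    hg.1 hx hy (by norm_num) (by norm_num) (by norm_num)
  have hlt := hg.2 hx hy hne one_half_pos one_half_pos (by norm_num)
  have h1 := hmx _ hmem
  have h2 : g x = g y := le_antisymm (hmx y hy) (hmy x hx)
  simp only [smul_eq_mul] at hlt h1
  linarith

lemma sconvSum {ι : Type*} {D : Set ℝ} {F : ι → ℝ → ℝ} (t : Finset ι) (ht : t.Nonempty)
    (h : ∀ i ∈ t, StrictConvexOn ℝ D (F i)) :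
    StrictConvexOn ℝ D (fun s => ∑ i ∈ t, F i s) := by
  induction t using Finset.cons_induction with
  | empty => simp at ht
  | cons a s ha ih =>
    rcases s.eq_empty_or_nonempty with rfl | hs
    · simpa using h a (Finset.mem_cons_self a _)
    · have he : (fun x => ∑ i ∈ Finset.cons a s ha, F i x)
          = (F a) + fun x => ∑ i ∈ s, F i x := by
        ext x; simp [Finset.sum_cons]
      rw [he]
      exact (h a (Finset.mem_cons_self a _)).add
        (ih hs (fun i hi => h i (Finset.mem_cons_of_mem hi)))


/-- Scalar strict convexity of `s ↦ a f(s/a)`. -/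
lemma sconv1 (hconv : StrictConvexOn ℝ (Set.Ici (0:ℝ)) f) {a : ℝ} (ha : 0 < a) :
    StrictConvexOn ℝ (Set.Ici (0:ℝ)) (fun s => a * f (s / a)) := by
  refine ⟨convex_Ici 0, ?_⟩
  intro x hx y hy hxy p q hp hq hpq
  have hx' : x / a ∈ Set.Ici (0:ℝ) := Set.mem_Ici.mpr (div_nonneg hx ha.le)
  have hy' : y / a ∈ Set.Ici (0:ℝ) := Set.mem_Ici.mpr (div_nonneg hy ha.le)
  have hxy' : x / a ≠ y / a := by
    intro h
    apply hxy
    rw [div_eq_div_iff ha.ne' ha.ne'] at h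
    exact mul_right_cancel₀ ha.ne' h
  have hkey := hconv.2 hx' hy' hxy' hp hq hpq
  simp only [smul_eq_mul] at hkey ⊢
  have harg : (p * x + q * y) / a = p * (x / a) + q * (y / a) := by field_simp
  rw [harg]
  nlinarith [hkey]

/-- Scalar strict convexity of the perspective `s ↦ s f(a/s)` on `(0,∞)`. -/
lemma sconv2 (hconv : StrictConvexOn ℝ (Set.Ici (0:ℝ)) f) {a : ℝ} (ha : 0 < a) :
    StrictConvexOn ℝ (Set.Ioi (0:ℝ)) (fun s => s * f (a / s)) := by
  refine ⟨convex_Ioi 0, ?_⟩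
  intro x hx y hy hxy p q hp hq hpq
  simp only [Set.mem_Ioi] at hx hy
  have hz : 0 < p * x + q * y := by positivity
  have ht1 : a / x ∈ Set.Ici (0:ℝ) := Set.mem_Ici.mpr (div_nonneg ha.le hx.le)
  have ht2 : a / y ∈ Set.Ici (0:ℝ) := Set.mem_Ici.mpr (div_nonneg ha.le hy.le)
  have htne : a / x ≠ a / y := by
    intro h
    apply hxy
    rw [div_eq_div_iff hx.ne' hy.ne'] at h
    exact mul_left_cancel₀ ha.ne' (by linarith [h])
  have hw1 : 0 < p * x / (p * x + q * y) := div_pos (by positivity) hz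
  have hw2 : 0 < q * y / (p * x + q * y) := div_pos (by positivity) hz
  have hwsum : p * x / (p * x + q * y) + q * y / (p * x + q * y) = 1 := by
    rw [← add_div, div_self hz.ne']
  have hkey := hconv.2 ht1 ht2 htne hw1 hw2 hwsum
  simp only [smul_eq_mul] at hkey ⊢
  have e1 : p * x / (p * x + q * y) * (a / x) = p * a / (p * x + q * y) := by
    field_simp <;> ring
  have e2 : q * y / (p * x + q * y) * (a / y) = q * a / (p * x + q * y) := by
    field_simp <;> ring
  have harg : p * x / (p * x + q * y) * (a / x) + q * y / (p * x + q * y) * (a / y)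
      = a / (p * x + q * y) := by
    rw [e1, e2, ← add_div]
    congr 1
    linear_combination a * hpq
  rw [harg] at hkey
  have := mul_lt_mul_of_pos_left hkey hz
  calc (p * x + q * y) * f (a / (p * x + q * y))
      < (p * x + q * y) * (p * x / (p * x + q * y) * f (a / x)
          + q * y / (p * x + q * y) * f (a / y)) := this
    _ = p * (x * f (a / x)) + q * (y * f (a / y)) := by field_simp

/-- strict decrease of the perspective term below `a`. -/
lemma perspDec (hconv : StrictConvexOn ℝ (Set.Ici (0:ℝ)) f) (hnonneg : ∀ t, 0 ≤ t → 0 ≤ f t)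
    (hf1 : f 1 = 0) {a s t : ℝ} (ha : 0 < a) (hs : 0 < s) (hst : s < t) (hta : t ≤ a) :
    t * f (a / t) < s * f (a / s) := by
  have ht : 0 < t := hs.trans hst
  have hu : 1 ≤ a / t := (one_le_div ht).mpr hta
  have huv : a / t < a / s := by
    rw [div_lt_div_iff₀ ht hs]
    nlinarith
  have hr := fratio hconv hnonneg hf1 hu huv
  -- hr : f (a/t) * (a/s) < f (a/s) * (a/t)
  have h1 : t * f (a / t) * (a / (s * t)) < s * f (a / s) * (a / (s * t)) := by
    have e1 : t * f (a / t) * (a / (s * t)) = f (a / t) * (a / s) := by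
      field_simp
    have e2 : s * f (a / s) * (a / (s * t)) = f (a / s) * (a / t) := by
      field_simp
    rw [e1, e2]; exact hr
  have hpos : 0 < a / (s * t) := div_pos ha (by positivity)
  exact lt_of_mul_lt_mul_right (by linarith [h1]) hpos.le

/-- Core 1-D existence of a minimizer. -/
lemma coreMin {g : ℝ → ℝ} {c : ℝ} (hc : 0 < c) (hcont : ContinuousOn g (Set.Ici c))
    (hdec : ∀ s t : ℝ, 0 < s → s < t → t ≤ c → g t < g s)
    (hcoer : Tendsto g atTop atTop) :
    ∃ s, c ≤ s ∧ ∀ t, 0 < t → g s ≤ g t := by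
  have hev : ∀ᶠ s in atTop, g c + 1 ≤ g s := hcoer.eventually_ge_atTop (g c + 1)
  obtain ⟨R, hR⟩ := eventually_atTop.mp hev
  set R' := max R c with hR'def
  have hcR' : c ≤ R' := le_max_right _ _
  obtain ⟨s₀, hs₀mem, hs₀min⟩ := (isCompact_Icc (a := c) (b := R')).exists_isMinOn
    ⟨c, Set.mem_Icc.mpr ⟨le_rfl, hcR'⟩⟩
    (hcont.mono (fun z hz => (Set.mem_Icc.mp hz).1))
  have hmin : ∀ t ∈ Set.Icc c R', g s₀ ≤ g t := fun t htm => isMinOn_iff.mp hs₀min t htm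
  refine ⟨s₀, (Set.mem_Icc.mp hs₀mem).1, ?_⟩
  intro t ht
  rcases le_or_gt t c with h1 | h2
  · rcases eq_or_lt_of_le h1 with rfl | h1'
    · exact hmin t (Set.mem_Icc.mpr ⟨le_rfl, hcR'⟩)
    · have := hdec t c ht h1' le_rfl
      have h2 := hmin c (Set.mem_Icc.mpr ⟨le_rfl, hcR'⟩)
      linarith
  · rcases le_or_gt t R' with h3 | h4
    · exact hmin t (Set.mem_Icc.mpr ⟨h2.le, h3⟩)
    · have hgt : g c + 1 ≤ g t := hR t ((le_max_left R c).trans h4.le)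
      have h2' := hmin c (Set.mem_Icc.mpr ⟨le_rfl, hcR'⟩)
      linarith


section Oned

variable (hconv : StrictConvexOn ℝ (Set.Ici (0:ℝ)) f)
  (hnonneg : ∀ t, 0 ≤ t → 0 ≤ f t) (hf1 : f 1 = 0)

include hconv hnonneg hf1 in
lemma oned1 {ι : Type*} [Fintype ι] [Nonempty ι] (A : ι → ℝ) (hA : ∀ i, 0 < A i) :
    ∃! s : ℝ, 0 ≤ s ∧ ∀ t, 0 ≤ t →
      (∑ i, A i * f (s / A i)) ≤ (∑ i, A i * f (t / A i)) := by
  set g : ℝ → ℝ := fun s => ∑ i, A i * f (s / A i) with hgdef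
  set c : ℝ := Finset.univ.inf' Finset.univ_nonempty A with hcdef
  have hc : 0 < c := (Finset.lt_inf'_iff _).mpr (fun i _ => hA i)
  have hcA : ∀ i, c ≤ A i := fun i => Finset.inf'_le _ (Finset.mem_univ i)
  have hgconv : StrictConvexOn ℝ (Set.Ici (0:ℝ)) g :=
    sconvSum Finset.univ Finset.univ_nonempty (fun i _ => sconv1 hconv (hA i))
  have hgcont : ContinuousOn g (Set.Ici c) := by
    apply continuousOn_finset_sum
    intro i _
    exact continuousOn_const.mul ((fcont hconv).comp
      (continuousOn_id.div_const (A i))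
      (fun s hs => Set.mem_Ioi.mpr (div_pos (lt_of_lt_of_le hc hs) (hA i))))
  have hdec0 : ∀ s t : ℝ, 0 ≤ s → s < t → t ≤ c → g t < g s := by
    intro s t hs hst htc
    apply Finset.sum_lt_sum_of_nonempty Finset.univ_nonempty
    intro i _
    apply mul_lt_mul_of_pos_left _ (hA i)
    exact fdec hconv hnonneg hf1 (div_nonneg hs (hA i).le)
      ((div_lt_div_iff_of_pos_right (hA i)).mpr hst)
      ((div_le_one (hA i)).mpr (htc.trans (hcA i)))
  have hnonnegterm : ∀ (s : ℝ), 0 ≤ s → ∀ i : ι, 0 ≤ A i * f (s / A i) := fun s hs i =>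
    mul_nonneg (hA i).le (hnonneg _ (div_nonneg hs (hA i).le))
  obtain ⟨i₀⟩ := (inferInstance : Nonempty ι)
  have hf32 : 0 < f 3 - f 2 := by
    have := finc hconv hnonneg hf1 (by norm_num : (1:ℝ) ≤ 2) (by norm_num : (2:ℝ) < 3)
    linarith
  have hlin : Tendsto (fun s : ℝ => A i₀ * f 2 + (f 3 - f 2) * (s - 2 * A i₀)) atTop atTop := by
    apply tendsto_atTop_add_const_left
    exact (tendsto_atTop_add_const_right atTop _ tendsto_id).const_mul_atTop hf32
  have hterm : Tendsto (fun s : ℝ => A i₀ * f (s / A i₀)) atTop atTop := by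
    apply tendsto_atTop_mono' atTop _ hlin
    filter_upwards [eventually_ge_atTop (3 * A i₀)] with s hs
    have h3 : 3 ≤ s / A i₀ := by rw [le_div_iff₀ (hA i₀)]; linarith
    have := fslope hconv h3
    have hmul := mul_le_mul_of_nonneg_left this (hA i₀).le
    have e : A i₀ * (f 2 + (f 3 - f 2) * (s / A i₀ - 2))
        = A i₀ * f 2 + (f 3 - f 2) * (s - 2 * A i₀) := by
      have hAne : (A i₀ : ℝ) ≠ 0 := (hA i₀).ne'
      field_simp <;> ring
    rw [e] at hmul
    exact hmul
  have hgcoer : Tendsto g atTop atTop := by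
    apply tendsto_atTop_mono' atTop _ hterm
    filter_upwards [eventually_ge_atTop (0:ℝ)] with s hs
    exact Finset.single_le_sum (fun i _ => hnonnegterm s hs i) (Finset.mem_univ i₀)
  obtain ⟨s₀, hs₀c, hs₀min⟩ := coreMin hc hgcont (fun s t hs => hdec0 s t hs.le) hgcoer
  have hs₀0 : 0 ≤ s₀ := (hc.trans_le hs₀c).le
  have hmin : ∀ t, 0 ≤ t → g s₀ ≤ g t := by
    intro t ht
    rcases eq_or_lt_of_le ht with rfl | ht'
    · have h1 : g c < g 0 := hdec0 0 c le_rfl hc le_rfl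
      have h2 : g s₀ ≤ g c := hs₀min c hc
      linarith
    · exact hs₀min t ht'
  refine ⟨s₀, ⟨hs₀0, hmin⟩, ?_⟩
  rintro s' ⟨hs'0, hs'min⟩
  exact minUnique hgconv (Set.mem_Ici.mpr hs'0) (Set.mem_Ici.mpr hs₀0)
    (fun t htm => hs'min t htm) (fun t htm => hmin t htm)

include hconv hnonneg hf1 in
lemma oned1' {ι : Type*} [Fintype ι] [Nonempty ι] (A B : ι → ℝ)
    (hA : ∀ i, 0 < A i) (hB : ∀ i, 0 < B i) :
    ∃! s : ℝ, 0 ≤ s ∧ ∀ t, 0 ≤ t →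
      (∑ i, A i * f (s / A i)) + (∑ i, B i * f (s / B i)) ≤
      (∑ i, A i * f (t / A i)) + (∑ i, B i * f (t / B i)) := by
  have h := oned1 hconv hnonneg hf1 (ι := ι ⊕ ι) (Sum.elim A B)
    (fun i => by cases i with
      | inl a => exact hA a
      | inr b => exact hB b)
  simpa only [Fintype.sum_sum_type, Sum.elim_inl, Sum.elim_inr] using h

include hconv hnonneg hf1 in
lemma oned2 {ι : Type*} [Fintype ι] [Nonempty ι] (A : ι → ℝ) (hA : ∀ i, 0 < A i) :
    ∃! s : ℝ, 0 < s ∧ ∀ t, 0 < t →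
      (∑ i, s * f (A i / s)) ≤ (∑ i, t * f (A i / t)) := by
  set g : ℝ → ℝ := fun s => ∑ i, s * f (A i / s) with hgdef
  set c : ℝ := Finset.univ.inf' Finset.univ_nonempty A with hcdef
  have hc : 0 < c := (Finset.lt_inf'_iff _).mpr (fun i _ => hA i)
  have hcA : ∀ i, c ≤ A i := fun i => Finset.inf'_le _ (Finset.mem_univ i)
  have hgconv : StrictConvexOn ℝ (Set.Ioi (0:ℝ)) g :=
    sconvSum Finset.univ Finset.univ_nonempty (fun i _ => sconv2 hconv (hA i))
  have hgcont : ContinuousOn g (Set.Ici c) := by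
    apply continuousOn_finset_sum
    intro i _
    apply continuousOn_id.mul
    apply (fcont hconv).comp (continuousOn_const.div continuousOn_id
      (fun s hs => (lt_of_lt_of_le hc hs).ne'))
    intro s hs
    exact Set.mem_Ioi.mpr (div_pos (hA i) (lt_of_lt_of_le hc hs))
  have hdec0 : ∀ s t : ℝ, 0 < s → s < t → t ≤ c → g t < g s := by
    intro s t hs hst htc
    apply Finset.sum_lt_sum_of_nonempty Finset.univ_nonempty
    intro i _
    exact perspDec hconv hnonneg hf1 (hA i) hs hst (htc.trans (hcA i))
  have hnonnegterm : ∀ (s : ℝ), 0 ≤ s → ∀ i : ι, 0 ≤ s * f (A i / s) := fun s hs i =>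
    mul_nonneg hs (hnonneg _ (div_nonneg (hA i).le hs))
  obtain ⟨i₀⟩ := (inferInstance : Nonempty ι)
  have hfhalf : 0 < f (1/2 : ℝ) := fpos hconv hnonneg hf1 (by norm_num) (by norm_num)
  have hlin : Tendsto (fun s : ℝ => s * f (1/2 : ℝ)) atTop atTop :=
    Tendsto.atTop_mul_const hfhalf tendsto_id
  have hterm : Tendsto (fun s : ℝ => s * f (A i₀ / s)) atTop atTop := by
    apply tendsto_atTop_mono' atTop _ hlin
    filter_upwards [eventually_ge_atTop (2 * A i₀), eventually_gt_atTop (0:ℝ)] with s hs hs0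
    have h1 : A i₀ / s ≤ 1/2 := by
      rw [div_le_div_iff₀ hs0 (by norm_num : (0:ℝ) < 2)]
      linarith
    have h2 : f (1/2 : ℝ) ≤ f (A i₀ / s) :=
      fdec_le hconv hnonneg hf1 (div_nonneg (hA i₀).le hs0.le) h1 (by norm_num)
    nlinarith
  have hgcoer : Tendsto g atTop atTop := by
    apply tendsto_atTop_mono' atTop _ hterm
    filter_upwards [eventually_ge_atTop (0:ℝ)] with s hs
    exact Finset.single_le_sum (fun i _ => hnonnegterm s hs i) (Finset.mem_univ i₀)
  obtain ⟨s₀, hs₀c, hs₀min⟩ := coreMin hc hgcont hdec0 hgcoer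
  have hs₀0 : 0 < s₀ := hc.trans_le hs₀c
  refine ⟨s₀, ⟨hs₀0, hs₀min⟩, ?_⟩
  rintro s' ⟨hs'0, hs'min⟩
  exact minUnique hgconv (Set.mem_Ioi.mpr hs'0) (Set.mem_Ioi.mpr hs₀0)
    (fun t htm => hs'min t htm) (fun t htm => hs₀min t htm)

include hconv hnonneg hf1 in
lemma oned2' {ι : Type*} [Fintype ι] [Nonempty ι] (A B : ι → ℝ)
    (hA : ∀ i, 0 < A i) (hB : ∀ i, 0 < B i) :
    ∃! s : ℝ, 0 < s ∧ ∀ t, 0 < t →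
      (∑ i, s * f (A i / s)) + (∑ i, s * f (B i / s)) ≤
      (∑ i, t * f (A i / t)) + (∑ i, t * f (B i / t)) := by
  have h := oned2 hconv hnonneg hf1 (ι := ι ⊕ ι) (Sum.elim A B)
    (fun i => by cases i with
      | inl a => exact hA a
      | inr b => exact hB b)
  simpa only [Fintype.sum_sum_type, Sum.elim_inl, Sum.elim_inr] using h

end Oned


section Assembly

/-- Build a matrix with prescribed off-diagonal entries and diagonal entries
chosen so that every row sums to zero. (local copy) -/
def rowZero' (F : X → X → ℝ) : X → X → ℝ :=
  fun x y => if x = y then -(∑ z ∈ Finset.univ.erase x, F x z) else F x y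

lemma rowZero'_offdiag (F : X → X → ℝ) {x y : X} (h : x ≠ y) : rowZero' F x y = F x y := by
  simp [rowZero', h]

lemma rowZero'_sum (F : X → X → ℝ) (x : X) : ∑ y, rowZero' F x y = 0 := by
  rw [← Finset.add_sum_erase _ _ (Finset.mem_univ x)]
  have h1 : rowZero' F x x = -(∑ z ∈ Finset.univ.erase x, F x z) := by simp [rowZero']
  have h2 : ∑ y ∈ Finset.univ.erase x, rowZero' F x y = ∑ y ∈ Finset.univ.erase x, F x y :=
    Finset.sum_congr rfl (fun y hy =>
      rowZero'_offdiag F (fun h => ((Finset.mem_erase.mp hy).1 h.symm)))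
  rw [h1, h2]
  ring

lemma sum_erase_swap (H : X → X → ℝ) :
    ∑ x, ∑ y ∈ Finset.univ.erase x, H x y = ∑ x, ∑ y ∈ Finset.univ.erase x, H y x := by
  have key : ∀ K : X → X → ℝ, ∀ x : X,
      ∑ y ∈ Finset.univ.erase x, K x y = (∑ y, K x y) - K x x := fun K x =>
    Finset.sum_erase_eq_sub (Finset.mem_univ x)
  calc ∑ x, ∑ y ∈ Finset.univ.erase x, H x y
      = ∑ x, ((∑ y, H x y) - H x x) := Finset.sum_congr rfl (fun x _ => key H x)
    _ = (∑ x, ∑ y, H x y) - ∑ x, H x x := Finset.sum_sub_distrib _ _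
    _ = (∑ x, ∑ y, H y x) - ∑ x, H x x := by rw [Finset.sum_comm]
    _ = ∑ x, ((∑ y, H y x) - H x x) := (Finset.sum_sub_distrib _ _).symm
    _ = ∑ x, ∑ y ∈ Finset.univ.erase x, H y x :=
        Finset.sum_congr rfl (fun x _ => (key (fun a b => H b a) x).symm)

end Assembly


section Assembly2

/-- local copy of Df -/
def Df' (f : ℝ → ℝ) (π : X → ℝ) (M L : X → X → ℝ) : ℝ :=
  ∑ x, π x * ∑ y ∈ Finset.univ.erase x, L x y * f (M x y / L x y)

def IsGen' (L : X → X → ℝ) : Prop :=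
  (∀ x y, x ≠ y → 0 ≤ L x y) ∧ (∀ x, ∑ y, L x y = 0)

variable (π : X → ℝ) (f : ℝ → ℝ) {n : ℕ} (L : Fin n → X → X → ℝ)

/-- per ordered pair objective, problem 1 -/
def phi1 (x y : X) (s : ℝ) : ℝ := ∑ i, (π x * L i x y) * f (s / (π x * L i x y))

/-- per ordered pair objective, problem 2 -/
def phi2 (x y : X) (s : ℝ) : ℝ := ∑ i, s * f ((π x * L i x y) / s)

lemma key1 (hπ : ∀ x, 0 < π x) (M : X → X → ℝ) :
    (∑ i, Df' f π M (L i)) =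
      ∑ x, ∑ y ∈ Finset.univ.erase x, phi1 π f L x y (π x * M x y) := by
  unfold Df' phi1
  rw [Finset.sum_comm]
  refine Finset.sum_congr rfl (fun x _ => ?_)
  calc ∑ i, π x * ∑ y ∈ Finset.univ.erase x, L i x y * f (M x y / L i x y)
      = ∑ i, ∑ y ∈ Finset.univ.erase x, π x * (L i x y * f (M x y / L i x y)) := by
        exact Finset.sum_congr rfl (fun i _ => Finset.mul_sum _ _ _)
    _ = ∑ y ∈ Finset.univ.erase x, ∑ i, π x * (L i x y * f (M x y / L i x y)) :=
        Finset.sum_comm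
    _ = ∑ y ∈ Finset.univ.erase x, ∑ i,
          (π x * L i x y) * f ((π x * M x y) / (π x * L i x y)) := by
        refine Finset.sum_congr rfl fun y _ => Finset.sum_congr rfl fun i _ => ?_
        rw [mul_div_mul_left _ _ (hπ x).ne']
        ring

lemma key2 (hπ : ∀ x, 0 < π x) (M : X → X → ℝ) :
    (∑ i, Df' f π (L i) M) =
      ∑ x, ∑ y ∈ Finset.univ.erase x, phi2 π f L x y (π x * M x y) := by
  unfold Df' phi2
  rw [Finset.sum_comm]
  refine Finset.sum_congr rfl (fun x _ => ?_)
  calc ∑ i, π x * ∑ y ∈ Finset.univ.erase x, M x y * f (L i x y / M x y)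
      = ∑ i, ∑ y ∈ Finset.univ.erase x, π x * (M x y * f (L i x y / M x y)) := by
        exact Finset.sum_congr rfl (fun i _ => Finset.mul_sum _ _ _)
    _ = ∑ y ∈ Finset.univ.erase x, ∑ i, π x * (M x y * f (L i x y / M x y)) :=
        Finset.sum_comm
    _ = ∑ y ∈ Finset.univ.erase x, ∑ i,
          (π x * M x y) * f ((π x * L i x y) / (π x * M x y)) := by
        refine Finset.sum_congr rfl fun y _ => Finset.sum_congr rfl fun i _ => ?_
        rw [mul_div_mul_left _ _ (hπ x).ne']
        ring


lemma part1 (hπ : ∀ x, 0 < π x)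
    (hconv : StrictConvexOn ℝ (Set.Ici (0:ℝ)) f)
    (hnonneg : ∀ t, 0 ≤ t → 0 ≤ f t) (hf1 : f 1 = 0)
    (hn : 0 < n) (hLpos : ∀ i x y, x ≠ y → 0 < L i x y) :
    ∃! M : X → X → ℝ, (IsGen' M ∧ ∀ x y, π x * M x y = π y * M y x) ∧
      ∀ M' : X → X → ℝ, (IsGen' M' ∧ ∀ x y, π x * M' x y = π y * M' y x) →
        ∑ i, Df' f π M (L i) ≤ ∑ i, Df' f π M' (L i) := by
  haveI : Nonempty (Fin n) := ⟨⟨0, hn⟩⟩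
  have EX : ∀ x y : X, x ≠ y → ∃! s : ℝ, 0 ≤ s ∧ ∀ t, 0 ≤ t →
      phi1 π f L x y s + phi1 π f L y x s ≤ phi1 π f L x y t + phi1 π f L y x t := by
    intro x y h
    exact oned1' hconv hnonneg hf1 (fun i => π x * L i x y) (fun i => π y * L i y x)
      (fun i => mul_pos (hπ x) (hLpos i x y h))
      (fun i => mul_pos (hπ y) (hLpos i y x h.symm))
  have EX' : ∀ x y : X, x ≠ y → ∃ s : ℝ, (0 ≤ s ∧ ∀ t, 0 ≤ t →
      phi1 π f L x y s + phi1 π f L y x s ≤ phi1 π f L x y t + phi1 π f L y x t) ∧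
      ∀ s' : ℝ, (0 ≤ s' ∧ ∀ t, 0 ≤ t →
        phi1 π f L x y s' + phi1 π f L y x s' ≤ phi1 π f L x y t + phi1 π f L y x t) →
        s' = s := EX
  have EX'' : ∀ x y : X, ∃ s : ℝ, x ≠ y → ((0 ≤ s ∧ ∀ t, 0 ≤ t →
      phi1 π f L x y s + phi1 π f L y x s ≤ phi1 π f L x y t + phi1 π f L y x t) ∧
      ∀ s' : ℝ, (0 ≤ s' ∧ ∀ t, 0 ≤ t →
        phi1 π f L x y s' + phi1 π f L y x s' ≤ phi1 π f L x y t + phi1 π f L y x t) →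
        s' = s) := by
    intro x y
    by_cases h : x = y
    · exact ⟨0, fun h' => absurd h h'⟩
    · obtain ⟨s, hs⟩ := EX' x y h
      exact ⟨s, fun _ => hs⟩
  choose σ hσ using EX''
  have hσ0 : ∀ (x y : X), x ≠ y → 0 ≤ σ x y := fun x y h => ((hσ x y h).1).1
  have hσmin : ∀ (x y : X), x ≠ y → ∀ t, 0 ≤ t →
      phi1 π f L x y (σ x y) + phi1 π f L y x (σ x y) ≤
      phi1 π f L x y t + phi1 π f L y x t := fun x y h => ((hσ x y h).1).2
  have hσuniq : ∀ (x y : X), x ≠ y → ∀ s' : ℝ, (0 ≤ s' ∧ ∀ t, 0 ≤ t →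
      phi1 π f L x y s' + phi1 π f L y x s' ≤ phi1 π f L x y t + phi1 π f L y x t) →
      s' = σ x y := fun x y h => (hσ x y h).2
  have hσsymm : ∀ (x y : X), x ≠ y → σ y x = σ x y := by
    intro x y h
    apply hσuniq x y h
    refine ⟨hσ0 y x h.symm, fun t ht => ?_⟩
    have := hσmin y x h.symm t ht
    linarith
  set Mst : X → X → ℝ := rowZero' (fun x y => σ x y / π x) with hMstdef
  have hMstoff : ∀ (x y : X), x ≠ y → Mst x y = σ x y / π x := by
    intro x y h
    rw [hMstdef, rowZero'_offdiag _ h]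
  have htst : ∀ (x y : X), x ≠ y → π x * Mst x y = σ x y := by
    intro x y h
    rw [hMstoff x y h, mul_comm, div_mul_cancel₀ _ (hπ x).ne']
  have hMstrev : IsGen' Mst ∧ ∀ x y, π x * Mst x y = π y * Mst y x := by
    refine ⟨⟨?_, fun x => rowZero'_sum _ x⟩, ?_⟩
    · intro x y h
      rw [hMstoff x y h]
      exact div_nonneg (hσ0 x y h) (hπ x).le
    · intro x y
      rcases eq_or_ne x y with rfl | h
      · rfl
      · rw [htst x y h, htst y x h.symm, hσsymm x y h]
  have hsym : ∀ M : X → X → ℝ, (∀ x y, π x * M x y = π y * M y x) →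
      2 * (∑ i, Df' f π M (L i)) = ∑ x, ∑ y ∈ Finset.univ.erase x,
        (phi1 π f L x y (π x * M x y) + phi1 π f L y x (π x * M x y)) := by
    intro M hM
    simp only [Finset.sum_add_distrib]
    rw [two_mul]
    rw [key1 π f L hπ M]
    congr 1
    have hswap := sum_erase_swap (X := X) (fun x y => phi1 π f L y x (π x * M x y))
    -- hswap : ∑ x, ∑ y∈erase x, phi1 y x (π x * M x y) = ∑ x, ∑ y∈erase x, phi1 x y (π y * M y x)
    rw [hswap]
    exact Finset.sum_congr rfl fun x _ => Finset.sum_congr rfl fun y _ => by rw [hM x y]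
  have hmin : ∀ M', (IsGen' M' ∧ ∀ x y, π x * M' x y = π y * M' y x) →
      (∑ i, Df' f π Mst (L i)) ≤ ∑ i, Df' f π M' (L i) := by
    intro M' hM'
    have h2le : 2 * (∑ i, Df' f π Mst (L i)) ≤ 2 * (∑ i, Df' f π M' (L i)) := by
      rw [hsym Mst hMstrev.2, hsym M' hM'.2]
      refine Finset.sum_le_sum fun x _ => Finset.sum_le_sum fun y hy => ?_
      have hxy : x ≠ y := fun h => (Finset.mem_erase.mp hy).1 h.symm
      rw [htst x y hxy]
      exact hσmin x y hxy _ (mul_nonneg (hπ x).le (hM'.1.1 x y hxy))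
    linarith
  refine ⟨Mst, ⟨hMstrev, hmin⟩, ?_⟩
  rintro M2 ⟨hM2rev, hM2min⟩
  have heq : (∑ i, Df' f π M2 (L i)) = ∑ i, Df' f π Mst (L i) :=
    le_antisymm (hM2min Mst hMstrev) (hmin M2 hM2rev)
  have hterm0 : ∀ x : X, ∀ y ∈ Finset.univ.erase x,
      (0:ℝ) ≤ (phi1 π f L x y (π x * M2 x y) + phi1 π f L y x (π x * M2 x y))
            - (phi1 π f L x y (π x * Mst x y) + phi1 π f L y x (π x * Mst x y)) := by
    intro x y hy
    have hxy : x ≠ y := fun h => (Finset.mem_erase.mp hy).1 h.symm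
    rw [htst x y hxy]
    have := hσmin x y hxy (π x * M2 x y) (mul_nonneg (hπ x).le (hM2rev.1.1 x y hxy))
    linarith
  have hsum0 : (∑ x, ∑ y ∈ Finset.univ.erase x,
      ((phi1 π f L x y (π x * M2 x y) + phi1 π f L y x (π x * M2 x y))
        - (phi1 π f L x y (π x * Mst x y) + phi1 π f L y x (π x * Mst x y)))) = 0 := by
    simp only [Finset.sum_sub_distrib]
    rw [← hsym M2 hM2rev.2, ← hsym Mst hMstrev.2, heq]
    ring
  have hzero1 := (Finset.sum_eq_zero_iff_of_nonneg
    (fun x _ => Finset.sum_nonneg (hterm0 x))).mp hsum0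
  have hzero2 : ∀ x : X, ∀ y ∈ Finset.univ.erase x,
      (phi1 π f L x y (π x * M2 x y) + phi1 π f L y x (π x * M2 x y))
        - (phi1 π f L x y (π x * Mst x y) + phi1 π f L y x (π x * Mst x y)) = 0 := by
    intro x
    exact fun y hy => (Finset.sum_eq_zero_iff_of_nonneg (hterm0 x)).mp
      (hzero1 x (Finset.mem_univ x)) y hy
  have hoff : ∀ x y : X, x ≠ y → M2 x y = Mst x y := by
    intro x y hxy
    have hy : y ∈ Finset.univ.erase x := Finset.mem_erase.mpr ⟨hxy.symm, Finset.mem_univ y⟩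
    have hz := hzero2 x y hy
    rw [htst x y hxy] at hz
    have ht2 : π x * M2 x y = σ x y := by
      apply hσuniq x y hxy
      refine ⟨mul_nonneg (hπ x).le (hM2rev.1.1 x y hxy), fun t ht => ?_⟩
      have h1 := hσmin x y hxy t ht
      linarith
    have : π x * M2 x y = π x * Mst x y := by rw [ht2, htst x y hxy]
    exact mul_left_cancel₀ (hπ x).ne' this
  funext x y
  rcases eq_or_ne x y with rfl | hxy
  · have e1 := hM2rev.1.2 x
    have e2 := hMstrev.1.2 x
    rw [← Finset.add_sum_erase _ _ (Finset.mem_univ x)] at e1 e2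
    have heq2 : ∑ y ∈ Finset.univ.erase x, M2 x y = ∑ y ∈ Finset.univ.erase x, Mst x y :=
      Finset.sum_congr rfl fun y hy =>
        hoff x y (fun h => (Finset.mem_erase.mp hy).1 h.symm)
    linarith
  · exact hoff x y hxy


lemma part2 (hπ : ∀ x, 0 < π x)
    (hconv : StrictConvexOn ℝ (Set.Ici (0:ℝ)) f)
    (hnonneg : ∀ t, 0 ≤ t → 0 ≤ f t) (hf1 : f 1 = 0)
    (hn : 0 < n) (hLpos : ∀ i x y, x ≠ y → 0 < L i x y) :
    ∃! M : X → X → ℝ,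
      ((IsGen' M ∧ ∀ x y, π x * M x y = π y * M y x) ∧ ∀ x y, x ≠ y → 0 < M x y) ∧
      ∀ M' : X → X → ℝ, (IsGen' M' ∧ ∀ x y, π x * M' x y = π y * M' y x) →
        (∀ x y, x ≠ y → 0 < M' x y) →
        ∑ i, Df' f π (L i) M ≤ ∑ i, Df' f π (L i) M' := by
  haveI : Nonempty (Fin n) := ⟨⟨0, hn⟩⟩
  have EX : ∀ x y : X, x ≠ y → ∃! s : ℝ, 0 < s ∧ ∀ t, 0 < t →
      phi2 π f L x y s + phi2 π f L y x s ≤ phi2 π f L x y t + phi2 π f L y x t := by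
    intro x y h
    exact oned2' hconv hnonneg hf1 (fun i => π x * L i x y) (fun i => π y * L i y x)
      (fun i => mul_pos (hπ x) (hLpos i x y h))
      (fun i => mul_pos (hπ y) (hLpos i y x h.symm))
  have EX'' : ∀ x y : X, ∃ s : ℝ, x ≠ y → ((0 < s ∧ ∀ t, 0 < t →
      phi2 π f L x y s + phi2 π f L y x s ≤ phi2 π f L x y t + phi2 π f L y x t) ∧
      ∀ s' : ℝ, (0 < s' ∧ ∀ t, 0 < t →
        phi2 π f L x y s' + phi2 π f L y x s' ≤ phi2 π f L x y t + phi2 π f L y x t) →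
        s' = s) := by
    intro x y
    by_cases h : x = y
    · exact ⟨0, fun h' => absurd h h'⟩
    · obtain ⟨s, hs⟩ := EX x y h
      exact ⟨s, fun _ => hs⟩
  choose σ hσ using EX''
  have hσ0 : ∀ (x y : X), x ≠ y → 0 < σ x y := fun x y h => ((hσ x y h).1).1
  have hσmin : ∀ (x y : X), x ≠ y → ∀ t, 0 < t →
      phi2 π f L x y (σ x y) + phi2 π f L y x (σ x y) ≤
      phi2 π f L x y t + phi2 π f L y x t := fun x y h => ((hσ x y h).1).2
  have hσuniq : ∀ (x y : X), x ≠ y → ∀ s' : ℝ, (0 < s' ∧ ∀ t, 0 < t →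
      phi2 π f L x y s' + phi2 π f L y x s' ≤ phi2 π f L x y t + phi2 π f L y x t) →
      s' = σ x y := fun x y h => (hσ x y h).2
  have hσsymm : ∀ (x y : X), x ≠ y → σ y x = σ x y := by
    intro x y h
    apply hσuniq x y h
    refine ⟨hσ0 y x h.symm, fun t ht => ?_⟩
    have := hσmin y x h.symm t ht
    linarith
  set Mst : X → X → ℝ := rowZero' (fun x y => σ x y / π x) with hMstdef
  have hMstoff : ∀ (x y : X), x ≠ y → Mst x y = σ x y / π x := by
    intro x y h
    rw [hMstdef, rowZero'_offdiag _ h]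
  have htst : ∀ (x y : X), x ≠ y → π x * Mst x y = σ x y := by
    intro x y h
    rw [hMstoff x y h, mul_comm, div_mul_cancel₀ _ (hπ x).ne']
  have hMstpos : ∀ (x y : X), x ≠ y → 0 < Mst x y := by
    intro x y h
    rw [hMstoff x y h]
    exact div_pos (hσ0 x y h) (hπ x)
  have hMstrev : IsGen' Mst ∧ ∀ x y, π x * Mst x y = π y * Mst y x := by
    refine ⟨⟨fun x y h => (hMstpos x y h).le, fun x => rowZero'_sum _ x⟩, ?_⟩
    intro x y
    rcases eq_or_ne x y with rfl | h
    · rfl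
    · rw [htst x y h, htst y x h.symm, hσsymm x y h]
  have hsym : ∀ M : X → X → ℝ, (∀ x y, π x * M x y = π y * M y x) →
      2 * (∑ i, Df' f π (L i) M) = ∑ x, ∑ y ∈ Finset.univ.erase x,
        (phi2 π f L x y (π x * M x y) + phi2 π f L y x (π x * M x y)) := by
    intro M hM
    simp only [Finset.sum_add_distrib]
    rw [two_mul]
    rw [key2 π f L hπ M]
    congr 1
    have hswap := sum_erase_swap (X := X) (fun x y => phi2 π f L y x (π x * M x y))
    rw [hswap]
    exact Finset.sum_congr rfl fun x _ => Finset.sum_congr rfl fun y _ => by rw [hM x y]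
  have hmin : ∀ M', (IsGen' M' ∧ ∀ x y, π x * M' x y = π y * M' y x) →
      (∀ x y, x ≠ y → 0 < M' x y) →
      (∑ i, Df' f π (L i) Mst) ≤ ∑ i, Df' f π (L i) M' := by
    intro M' hM' hM'pos
    have h2le : 2 * (∑ i, Df' f π (L i) Mst) ≤ 2 * (∑ i, Df' f π (L i) M') := by
      rw [hsym Mst hMstrev.2, hsym M' hM'.2]
      refine Finset.sum_le_sum fun x _ => Finset.sum_le_sum fun y hy => ?_
      have hxy : x ≠ y := fun h => (Finset.mem_erase.mp hy).1 h.symm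
      rw [htst x y hxy]
      exact hσmin x y hxy _ (mul_pos (hπ x) (hM'pos x y hxy))
    linarith
  refine ⟨Mst, ⟨⟨hMstrev, hMstpos⟩, hmin⟩, ?_⟩
  rintro M2 ⟨⟨hM2rev, hM2pos⟩, hM2min⟩
  have heq : (∑ i, Df' f π (L i) M2) = ∑ i, Df' f π (L i) Mst :=
    le_antisymm (hM2min Mst hMstrev hMstpos) (hmin M2 hM2rev hM2pos)
  have hterm0 : ∀ x : X, ∀ y ∈ Finset.univ.erase x,
      (0:ℝ) ≤ (phi2 π f L x y (π x * M2 x y) + phi2 π f L y x (π x * M2 x y))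
            - (phi2 π f L x y (π x * Mst x y) + phi2 π f L y x (π x * Mst x y)) := by
    intro x y hy
    have hxy : x ≠ y := fun h => (Finset.mem_erase.mp hy).1 h.symm
    rw [htst x y hxy]
    have := hσmin x y hxy (π x * M2 x y) (mul_pos (hπ x) (hM2pos x y hxy))
    linarith
  have hsum0 : (∑ x, ∑ y ∈ Finset.univ.erase x,
      ((phi2 π f L x y (π x * M2 x y) + phi2 π f L y x (π x * M2 x y))
        - (phi2 π f L x y (π x * Mst x y) + phi2 π f L y x (π x * Mst x y)))) = 0 := by
    simp only [Finset.sum_sub_distrib]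
    rw [← hsym M2 hM2rev.2, ← hsym Mst hMstrev.2, heq]
    ring
  have hzero1 := (Finset.sum_eq_zero_iff_of_nonneg
    (fun x _ => Finset.sum_nonneg (hterm0 x))).mp hsum0
  have hzero2 : ∀ x : X, ∀ y ∈ Finset.univ.erase x,
      (phi2 π f L x y (π x * M2 x y) + phi2 π f L y x (π x * M2 x y))
        - (phi2 π f L x y (π x * Mst x y) + phi2 π f L y x (π x * Mst x y)) = 0 := by
    intro x
    exact fun y hy => (Finset.sum_eq_zero_iff_of_nonneg (hterm0 x)).mp
      (hzero1 x (Finset.mem_univ x)) y hy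
  have hoff : ∀ x y : X, x ≠ y → M2 x y = Mst x y := by
    intro x y hxy
    have hy : y ∈ Finset.univ.erase x := Finset.mem_erase.mpr ⟨hxy.symm, Finset.mem_univ y⟩
    have hz := hzero2 x y hy
    rw [htst x y hxy] at hz
    have ht2 : π x * M2 x y = σ x y := by
      apply hσuniq x y hxy
      refine ⟨mul_pos (hπ x) (hM2pos x y hxy), fun t ht => ?_⟩
      have h1 := hσmin x y hxy t ht
      linarith
    have : π x * M2 x y = π x * Mst x y := by rw [ht2, htst x y hxy]
    exact mul_left_cancel₀ (hπ x).ne' this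
  funext x y
  rcases eq_or_ne x y with rfl | hxy
  · have e1 := hM2rev.1.2 x
    have e2 := hMstrev.1.2 x
    rw [← Finset.add_sum_erase _ _ (Finset.mem_univ x)] at e1 e2
    have heq2 : ∑ y ∈ Finset.univ.erase x, M2 x y = ∑ y ∈ Finset.univ.erase x, Mst x y :=
      Finset.sum_congr rfl fun y hy =>
        hoff x y (fun h => (Finset.mem_erase.mp hy).1 h.symm)
    linarith
  · exact hoff x y hxy

end Assembly2

end CentroidAux

/-- **Existence and uniqueness of `f`- and `f*`-projection centroids**
(Theorem 3.18): for strictly convex `f : [0,∞) → [0,∞)` with `f(1) = 0`,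
differentiable at `1` with `f′(1) = 0`, and `L₁, …, Lₙ ∈ ℒ⁺`, the map
`ℒ(π) ∋ M ↦ ∑ᵢ D_f(M‖Lᵢ)` attains a unique minimum, and the map
`ℒ⁺(π) ∋ M ↦ ∑ᵢ D_f(Lᵢ‖M)` attains a unique minimum. -/
theorem centroid_exists_unique (π : X → ℝ) (hπ : IsProb π)
    (f : ℝ → ℝ) (hconv : StrictConvexOn ℝ (Set.Ici (0 : ℝ)) f)
    (hnonneg : ∀ t, 0 ≤ t → 0 ≤ f t) (hf1 : f 1 = 0)
    (hf'1 : HasDerivAt f 0 1)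
    (n : ℕ) (hn : 0 < n) (L : Fin n → X → X → ℝ)
    (hLgen : ∀ i, IsGen (L i)) (hLpos : ∀ i x y, x ≠ y → 0 < L i x y) :
    (∃! M : X → X → ℝ, IsRev π M ∧
      ∀ M' : X → X → ℝ, IsRev π M' →
        ∑ i, Df f π M (L i) ≤ ∑ i, Df f π M' (L i)) ∧
    (∃! M : X → X → ℝ, (IsRev π M ∧ ∀ x y, x ≠ y → 0 < M x y) ∧
      ∀ M' : X → X → ℝ, IsRev π M' → (∀ x y, x ≠ y → 0 < M' x y) →
        ∑ i, Df f π (L i) M ≤ ∑ i, Df f π (L i) M') := by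
  constructor
  · exact CentroidAux.part1 π f L hπ.1 hconv hnonneg hf1 hn hLpos
  · exact CentroidAux.part2 π f L hπ.1 hconv hnonneg hf1 hn hLpos

end
end

section
/- Centroids under the Kullback–Leibler divergence: Let L₁, …, Lₙ ∈ ℒ⁺. The map ℒ(π) ∋ M ↦ Σ_{i=1}^n D_KL(M||L_i) attains a unique minimum at the generator with off-diagonal entries (∏_{i=1}^n P_0(L_i)(x,y))^{1/n} = ∏_{i=1}^n (L_i(x,y)·L_{i,π}(x,y))^{1/(2n)}, and the map ℒ⁺(π) ∋ M ↦ Σ_{i=1}^n D_KL(L_i||M) attains a unique minimum at the generator with off-diagonal entries (1/n)·Σ_{i=1}^n P_1(L_i)(x,y) = (1/n)·Σ_{i=1}^n (L_i(x,y)+L_{i,π}(x,y))/2. -/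
open Finset

noncomputable section

variable {X : Type*} [Fintype X] [DecidableEq X]

/-- Generator of the Kullback–Leibler divergence: `f(t) = t·ln t − t + 1`. -/
def fKL : ℝ → ℝ := fun t => t * Real.log t - t + 1

/-- The geometric mean reversiblization `P₀(L)`:
off-diagonal entries `(L(x,y)·L_π(x,y))^{1/2}`. -/
def geoRev (π : X → ℝ) (L : X → X → ℝ) : X → X → ℝ :=
  rowZero (fun x y => Real.sqrt (L x y * dual π L x y))

/-- The additive reversiblization `P₁(L)`:
off-diagonal entries `(L(x,y) + L_π(x,y))/2`. -/
def addRev (π : X → ℝ) (L : X → X → ℝ) : X → X → ℝ :=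
  rowZero (fun x y => (L x y + dual π L x y) / 2)

-- helper lemmas

lemma rowZero_off (F : X → X → ℝ) {x y : X} (h : x ≠ y) : rowZero F x y = F x y :=
  if_neg h

lemma rowZero_diag (F : X → X → ℝ) (x : X) :
    rowZero F x x = -(∑ z ∈ Finset.univ.erase x, F x z) := if_pos rfl

lemma rowZero_rowsum (F : X → X → ℝ) (x : X) : ∑ y, rowZero F x y = 0 := by
  rw [← Finset.add_sum_erase _ _ (Finset.mem_univ x), rowZero_diag]
  rw [Finset.sum_congr rfl fun y hy =>
    rowZero_off F (Finset.ne_of_mem_erase hy).symm]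
  ring

lemma isGen_rowZero (F : X → X → ℝ) (h : ∀ x y, x ≠ y → 0 ≤ F x y) :
    IsGen (rowZero F) :=
  ⟨fun x y hxy => by rw [rowZero_off F hxy]; exact h x y hxy,
   rowZero_rowsum F⟩

lemma gen_diag {M : X → X → ℝ} (h : IsGen M) (x : X) :
    M x x = -(∑ y ∈ Finset.univ.erase x, M x y) := by
  have := Finset.add_sum_erase Finset.univ (M x) (Finset.mem_univ x)
  rw [h.2 x] at this
  linarith

lemma eq_rowZero_of_offdiag {M : X → X → ℝ} {F : X → X → ℝ} (hM : IsGen M)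
    (h : ∀ x y, x ≠ y → M x y = F x y) : M = rowZero F := by
  funext x y
  by_cases hxy : x = y
  · subst hxy
    rw [rowZero_diag, gen_diag hM]
    congr 1
    exact Finset.sum_congr rfl fun z hz => h x z (Finset.ne_of_mem_erase hz).symm
  · rw [rowZero_off F hxy]; exact h x y hxy

lemma sum_erase_eq_ite (g : X → X → ℝ) (x : X) :
    ∑ y ∈ Finset.univ.erase x, g x y = ∑ y, if y = x then 0 else g x y := by
  have h1 : ∑ y ∈ Finset.univ.erase x, g x y
      = ∑ y ∈ Finset.univ.erase x, (if y = x then 0 else g x y) :=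
    Finset.sum_congr rfl fun y hy => (if_neg (Finset.ne_of_mem_erase hy)).symm
  rw [h1]
  exact Finset.sum_erase _ (by simp)

lemma sum_erase_antisymm (F : X → X → ℝ) (hF : ∀ x y, x ≠ y → F x y = -F y x) :
    ∑ x, ∑ y ∈ Finset.univ.erase x, F x y = 0 := by
  have key : (∑ x, ∑ y ∈ Finset.univ.erase x, F x y)
      = -∑ x, ∑ y ∈ Finset.univ.erase x, F x y := by
    conv_lhs =>
      rw [Finset.sum_congr rfl fun x _ => sum_erase_eq_ite F x]
    rw [Finset.sum_comm]
    have h3 : ∀ y : X, ∑ x, (if y = x then 0 else F x y)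
        = -∑ x ∈ Finset.univ.erase y, F y x := by
      intro y
      have h2 : ∑ x, (if y = x then 0 else F x y)
          = ∑ x, -(if x = y then 0 else F y x) := by
        refine Finset.sum_congr rfl fun x _ => ?_
        by_cases hxy : x = y
        · subst hxy; simp
        · rw [if_neg (fun h => hxy h.symm), if_neg hxy, hF x y hxy]
      rw [h2, Finset.sum_neg_distrib, ← sum_erase_eq_ite]
    rw [Finset.sum_congr rfl fun y _ => h3 y, Finset.sum_neg_distrib]
  linarith

lemma fKL_expand {a b : ℝ} (ha : 0 ≤ a) (hb : 0 < b) :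
    b * fKL (a / b) = a * Real.log a - a * Real.log b - a + b := by
  rcases eq_or_lt_of_le ha with h | h
  · simp [← h, fKL]
  · unfold fKL
    rw [Real.log_div h.ne' hb.ne']
    field_simp

lemma fKL_nonneg {t : ℝ} (ht : 0 ≤ t) : 0 ≤ fKL t := by
  rcases eq_or_lt_of_le ht with h | h
  · simp [← h, fKL]
  · have h1 : Real.log t⁻¹ ≤ t⁻¹ - 1 := Real.log_le_sub_one_of_pos (inv_pos.2 h)
    rw [Real.log_inv] at h1
    have h2 := mul_le_mul_of_nonneg_left h1 ht
    have h3 : t * t⁻¹ = 1 := mul_inv_cancel₀ h.ne'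
    unfold fKL
    nlinarith

lemma fKL_pos {t : ℝ} (ht : 0 ≤ t) (hne : t ≠ 1) : 0 < fKL t := by
  rcases eq_or_lt_of_le ht with h | h
  · simp [← h, fKL]
  · have h1 : Real.log t⁻¹ < t⁻¹ - 1 :=
      Real.log_lt_sub_one_of_pos (inv_pos.2 h) (by simpa using hne)
    rw [Real.log_inv] at h1
    have h2 := mul_lt_mul_of_pos_left h1 h
    have h3 : t * t⁻¹ = 1 := mul_inv_cancel₀ h.ne'
    unfold fKL
    nlinarith

lemma Df_swap (f : ℝ → ℝ) (π : X → ℝ) (M : X → X → ℝ) {n : ℕ}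
    (L : Fin n → X → X → ℝ) :
    ∑ i, Df f π M (L i)
      = ∑ x, ∑ y ∈ Finset.univ.erase x,
          π x * ∑ i, L i x y * f (M x y / L i x y) := by
  unfold Df
  rw [Finset.sum_comm]
  refine Finset.sum_congr rfl fun x _ => ?_
  simp_rw [Finset.mul_sum]
  exact Finset.sum_comm

lemma Df_swap' (f : ℝ → ℝ) (π : X → ℝ) (M : X → X → ℝ) {n : ℕ}
    (L : Fin n → X → X → ℝ) :
    ∑ i, Df f π (L i) M
      = ∑ x, ∑ y ∈ Finset.univ.erase x,
          π x * ∑ i, M x y * f (L i x y / M x y) := by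
  unfold Df
  rw [Finset.sum_comm]
  refine Finset.sum_congr rfl fun x _ => ?_
  simp_rw [Finset.mul_sum]
  exact Finset.sum_comm

lemma offdiag_sum_eq (A B : X → X → ℝ)
    (h : ∀ x y, x ≠ y → A x y - B x y = -(A y x - B y x)) :
    ∑ x, ∑ y ∈ Finset.univ.erase x, A x y
      = ∑ x, ∑ y ∈ Finset.univ.erase x, B x y := by
  have h0 := sum_erase_antisymm (fun x y => A x y - B x y) h
  simp only [Finset.sum_sub_distrib] at h0
  linarith

/-- **Centroids under the Kullback–Leibler divergence** (Theorem 3.19(4)):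
for `L₁, …, Lₙ ∈ ℒ⁺`, the map `ℒ(π) ∋ M ↦ ∑ᵢ D_KL(M‖Lᵢ)` attains a unique
minimum at the generator with off-diagonal entries
`(∏ᵢ P₀(Lᵢ)(x,y))^{1/n} = ∏ᵢ (Lᵢ(x,y)·L_{i,π}(x,y))^{1/(2n)}`, and the map
`ℒ⁺(π) ∋ M ↦ ∑ᵢ D_KL(Lᵢ‖M)` attains a unique minimum at the generator with
off-diagonal entries `(1/n)·∑ᵢ P₁(Lᵢ)(x,y) = (1/n)·∑ᵢ (Lᵢ(x,y)+L_{i,π}(x,y))/2`. -/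
theorem KL_centroids (π : X → ℝ) (hπ : IsProb π)
    (n : ℕ) (hn : 0 < n) (L : Fin n → X → X → ℝ)
    (hLgen : ∀ i, IsGen (L i)) (hLpos : ∀ i x y, x ≠ y → 0 < L i x y) :
    (IsRev π (rowZero (fun x y => (∏ i, geoRev π (L i) x y) ^ ((1 : ℝ) / n))) ∧
      (∀ x y, x ≠ y →
        (∏ i, geoRev π (L i) x y) ^ ((1 : ℝ) / n) =
          ∏ i, (L i x y * dual π (L i) x y) ^ (1 / (2 * (n : ℝ)))) ∧
      (∀ M, IsRev π M →
        ∑ i, Df fKL π (rowZero (fun x y =>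
            (∏ i, geoRev π (L i) x y) ^ ((1 : ℝ) / n))) (L i) ≤
          ∑ i, Df fKL π M (L i)) ∧
      (∀ M, IsRev π M →
        ∑ i, Df fKL π M (L i) =
          ∑ i, Df fKL π (rowZero (fun x y =>
            (∏ i, geoRev π (L i) x y) ^ ((1 : ℝ) / n))) (L i) →
        M = rowZero (fun x y => (∏ i, geoRev π (L i) x y) ^ ((1 : ℝ) / n)))) ∧
    ((IsRev π (rowZero (fun x y => (1 / (n : ℝ)) * ∑ i, addRev π (L i) x y)) ∧
       (∀ x y, x ≠ y →
         (1 / (n : ℝ)) * ∑ i, addRev π (L i) x y =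
           (1 / (n : ℝ)) * ∑ i, (L i x y + dual π (L i) x y) / 2) ∧
       ∀ x y, x ≠ y →
         0 < rowZero (fun x y => (1 / (n : ℝ)) * ∑ i, addRev π (L i) x y) x y) ∧
      (∀ M, IsRev π M → (∀ x y, x ≠ y → 0 < M x y) →
        ∑ i, Df fKL π (L i) (rowZero (fun x y =>
            (1 / (n : ℝ)) * ∑ i, addRev π (L i) x y)) ≤
          ∑ i, Df fKL π (L i) M) ∧
      (∀ M, IsRev π M → (∀ x y, x ≠ y → 0 < M x y) →
        ∑ i, Df fKL π (L i) M =
          ∑ i, Df fKL π (L i) (rowZero (fun x y =>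
            (1 / (n : ℝ)) * ∑ i, addRev π (L i) x y)) →
        M = rowZero (fun x y => (1 / (n : ℝ)) * ∑ i, addRev π (L i) x y))) := by
  have hπp : ∀ x, 0 < π x := hπ.1
  have hne : (n : ℝ) ≠ 0 := Nat.cast_ne_zero.mpr hn.ne'
  set c : X → X → ℝ := fun x y => (∏ i, geoRev π (L i) x y) ^ ((1 : ℝ) / n) with hc
  set aa : X → X → ℝ := fun x y => (1 / (n : ℝ)) * ∑ i, addRev π (L i) x y with haadef
  have hdual : ∀ (K : X → X → ℝ) (x y : X), x ≠ y →
      dual π K x y = π y * K y x / π x := fun K x y h => rowZero_off _ h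
  have hdualpos : ∀ i x y, x ≠ y → 0 < dual π (L i) x y := by
    intro i x y h
    rw [hdual (L i) x y h]
    exact div_pos (mul_pos (hπp y) (hLpos i y x h.symm)) (hπp x)
  have hgeo : ∀ i x y, x ≠ y →
      geoRev π (L i) x y = Real.sqrt (L i x y * dual π (L i) x y) :=
    fun i x y h => rowZero_off _ h
  have hu : ∀ i x y, x ≠ y → 0 < L i x y * dual π (L i) x y :=
    fun i x y h => mul_pos (hLpos i x y h) (hdualpos i x y h)
  have hgpos : ∀ i x y, x ≠ y → 0 < geoRev π (L i) x y := by
    intro i x y h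
    rw [hgeo i x y h]
    exact Real.sqrt_pos.mpr (hu i x y h)
  have hcpos : ∀ x y, x ≠ y → 0 < c x y := by
    intro x y h
    exact Real.rpow_pos_of_pos (Finset.prod_pos fun i _ => hgpos i x y h) _
  have hentryA : ∀ x y, x ≠ y →
      c x y = ∏ i, (L i x y * dual π (L i) x y) ^ (1 / (2 * (n : ℝ))) := by
    intro x y h
    show (∏ i, geoRev π (L i) x y) ^ ((1 : ℝ) / n) = _
    rw [Finset.prod_congr rfl fun i _ => hgeo i x y h,
        Finset.prod_congr rfl fun i _ =>
          Real.sqrt_eq_rpow (L i x y * dual π (L i) x y),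
        ← Real.finset_prod_rpow _ _
          (fun i _ => Real.rpow_nonneg (hu i x y h).le _) ((1 : ℝ) / n)]
    refine Finset.prod_congr rfl fun i _ => ?_
    rw [← Real.rpow_mul (hu i x y h).le]
    congr 1
    field_simp
  have hπsq : ∀ x : X, π x = ∏ _i : Fin n, ((π x) ^ 2 : ℝ) ^ (1 / (2 * (n : ℝ))) := by
    intro x
    rw [Finset.prod_const, Finset.card_univ, Fintype.card_fin,
        ← Real.rpow_natCast ((((π x) ^ 2 : ℝ)) ^ (1 / (2 * (n : ℝ)))) n,
        ← Real.rpow_mul (by positivity),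
        show 1 / (2 * (n : ℝ)) * (n : ℝ) = 1 / 2 by field_simp,
        ← Real.sqrt_eq_rpow, Real.sqrt_sq (hπp x).le]
  have hrevc' : ∀ x y, x ≠ y → π x * c x y
      = ∏ i, (π x * π y * (L i x y * L i y x)) ^ (1 / (2 * (n : ℝ))) := by
    intro x y h
    rw [hentryA x y h]
    conv_lhs => rw [hπsq x]
    rw [← Finset.prod_mul_distrib]
    refine Finset.prod_congr rfl fun i _ => ?_
    rw [← Real.mul_rpow (by positivity) (hu i x y h).le]
    congr 1
    rw [hdual (L i) x y h]
    field_simp [(hπp x).ne']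
  have hrevc : ∀ x y, x ≠ y → π x * c x y = π y * c y x := by
    intro x y h
    rw [hrevc' x y h, hrevc' y x h.symm]
    exact Finset.prod_congr rfl fun i _ => by ring_nf
  have hCgen : IsGen (rowZero c) := isGen_rowZero c fun x y h => (hcpos x y h).le
  have hCrev : IsRev π (rowZero c) := by
    refine ⟨hCgen, fun x y => ?_⟩
    by_cases h : x = y
    · subst h; rfl
    · rw [rowZero_off c h, rowZero_off c (Ne.symm h)]
      exact hrevc x y h
  have hlogc : ∀ x y, x ≠ y → (n : ℝ) * Real.log (c x y)
      = ((∑ i, Real.log (L i x y)) + (∑ i, Real.log (L i y x))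
          + (n : ℝ) * (Real.log (π y) - Real.log (π x))) / 2 := by
    intro x y h
    have hprodpos : 0 < ∏ i, geoRev π (L i) x y :=
      Finset.prod_pos fun i _ => hgpos i x y h
    show (n : ℝ) * Real.log ((∏ i, geoRev π (L i) x y) ^ ((1 : ℝ) / n)) = _
    rw [Real.log_rpow hprodpos, ← mul_assoc,
        show (n : ℝ) * ((1 : ℝ) / n) = 1 by field_simp, one_mul,
        Real.log_prod (fun i _ => (hgpos i x y h).ne')]
    rw [Finset.sum_congr rfl fun i (_ : i ∈ Finset.univ) => by
      rw [hgeo i x y h, Real.log_sqrt (hu i x y h).le, hdual (L i) x y h,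
          Real.log_mul (hLpos i x y h).ne'
            (div_pos (mul_pos (hπp y) (hLpos i y x (Ne.symm h))) (hπp x)).ne',
          Real.log_div (mul_pos (hπp y) (hLpos i y x (Ne.symm h))).ne' (hπp x).ne',
          Real.log_mul (hπp y).ne' (hLpos i y x (Ne.symm h)).ne']]
    rw [← Finset.sum_div]
    congr 1
    simp only [Finset.sum_add_distrib, Finset.sum_sub_distrib, Finset.sum_const,
      Finset.card_univ, Fintype.card_fin, nsmul_eq_mul]
    ring
  -- expansion of sums of fKL terms
  have e1 : ∀ (N : X → X → ℝ), (∀ x y, x ≠ y → 0 ≤ N x y) → ∀ x y, x ≠ y →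
      ∑ i, L i x y * fKL (N x y / L i x y)
        = (n : ℝ) * (N x y * Real.log (N x y))
          - N x y * (∑ i, Real.log (L i x y)) - (n : ℝ) * N x y
          + ∑ i, L i x y := by
    intro N hN x y h
    rw [Finset.sum_congr rfl fun i _ => fKL_expand (hN x y h) (hLpos i x y h)]
    simp only [Finset.sum_add_distrib, Finset.sum_sub_distrib, Finset.sum_const,
      Finset.card_univ, Fintype.card_fin, nsmul_eq_mul, ← Finset.mul_sum]
    all_goals ring
  have keyA : ∀ M, IsRev π M →
      ∑ i, Df fKL π M (L i)
        = (∑ i, Df fKL π (rowZero c) (L i))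
          + ∑ x, ∑ y ∈ Finset.univ.erase x,
              π x * ((n : ℝ) * (c x y * fKL (M x y / c x y))) := by
    intro M hM
    have hMnn : ∀ x y, x ≠ y → 0 ≤ M x y := hM.1.1
    rw [Df_swap, Df_swap]
    have step : ∑ x, ∑ y ∈ Finset.univ.erase x,
          π x * ∑ i, L i x y * fKL (rowZero c x y / L i x y)
        = ∑ x, ∑ y ∈ Finset.univ.erase x,
          π x * ∑ i, L i x y * fKL (c x y / L i x y) :=
      Finset.sum_congr rfl fun x _ => Finset.sum_congr rfl fun y hy => by
        rw [rowZero_off c (Finset.ne_of_mem_erase hy).symm]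
    rw [step]
    simp only [← Finset.sum_add_distrib]
    refine offdiag_sum_eq _ _ ?_
    intro x y hxy
    have pe : ∀ x y, x ≠ y →
        π x * ∑ i, L i x y * fKL (M x y / L i x y)
          - (π x * ∑ i, L i x y * fKL (c x y / L i x y)
             + π x * ((n : ℝ) * (c x y * fKL (M x y / c x y))))
        = π x * ((M x y - c x y)
            * ((n : ℝ) * Real.log (c x y) - ∑ i, Real.log (L i x y))) := by
      intro x y h
      rw [e1 M hMnn x y h, e1 c (fun x y h => (hcpos x y h).le) x y h,
          fKL_expand (hMnn x y h) (hcpos x y h)]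
      ring
    rw [pe x y hxy, pe y x hxy.symm]
    have hz : (n : ℝ) * Real.log (c y x) - ∑ i, Real.log (L i y x)
        = -((n : ℝ) * Real.log (c x y) - ∑ i, Real.log (L i x y)) := by
      have h1 := hlogc x y hxy
      have h2 := hlogc y x hxy.symm
      linarith
    rw [hz]
    have h1 := hM.2 x y
    have h2 := hrevc x y hxy
    linear_combination ((n : ℝ) * Real.log (c x y) - ∑ i, Real.log (L i x y)) * h1
      - ((n : ℝ) * Real.log (c x y) - ∑ i, Real.log (L i x y)) * h2
  have Rnn : ∀ M : X → X → ℝ, (∀ x y, x ≠ y → 0 ≤ M x y) →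
      (0:ℝ) ≤ ∑ x, ∑ y ∈ Finset.univ.erase x,
          π x * ((n : ℝ) * (c x y * fKL (M x y / c x y))) := by
    intro M hMnn
    refine Finset.sum_nonneg fun x _ => Finset.sum_nonneg fun y hy => ?_
    have hxy : x ≠ y := (Finset.ne_of_mem_erase hy).symm
    have := fKL_nonneg (div_nonneg (hMnn x y hxy) (hcpos x y hxy).le)
    have := (hcpos x y hxy).le
    have := (hπp x).le
    positivity
  -- Part B setup
  have haddoff : ∀ i x y, x ≠ y →
      addRev π (L i) x y = (L i x y + dual π (L i) x y) / 2 :=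
    fun i x y h => rowZero_off _ h
  have haapos : ∀ x y, x ≠ y → 0 < aa x y := by
    intro x y h
    show 0 < (1 / (n : ℝ)) * ∑ i, addRev π (L i) x y
    refine mul_pos (by positivity) (Finset.sum_pos (fun i _ => ?_) ⟨⟨0, hn⟩, Finset.mem_univ _⟩)
    rw [haddoff i x y h]
    have := hLpos i x y h
    have := hdualpos i x y h
    linarith
  have hentryB : ∀ x y, x ≠ y →
      aa x y = (1 / (n : ℝ)) * ∑ i, (L i x y + dual π (L i) x y) / 2 := by
    intro x y h
    show (1 / (n : ℝ)) * ∑ i, addRev π (L i) x y = _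
    rw [Finset.sum_congr rfl fun i (_ : i ∈ Finset.univ) => haddoff i x y h]
  have hTa : ∀ x y, x ≠ y → π x * ((n : ℝ) * aa x y)
      = ((π x * ∑ i, L i x y) + π y * ∑ i, L i y x) / 2 := by
    intro x y h
    show π x * ((n : ℝ) * ((1 / (n : ℝ)) * ∑ i, addRev π (L i) x y)) = _
    rw [show (n : ℝ) * ((1 / (n : ℝ)) * ∑ i, addRev π (L i) x y)
        = ∑ i, addRev π (L i) x y by field_simp]
    rw [Finset.mul_sum]
    rw [Finset.sum_congr rfl fun i (_ : i ∈ Finset.univ) =>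
      show π x * addRev π (L i) x y = (π x * L i x y + π y * L i y x) / 2 by
        rw [haddoff i x y h, hdual (L i) x y h]
        field_simp [(hπp x).ne']]
    rw [← Finset.sum_div, Finset.sum_add_distrib, ← Finset.mul_sum, ← Finset.mul_sum]
  have hreva : ∀ x y, x ≠ y → π x * aa x y = π y * aa y x := by
    intro x y h
    have h1 := hTa x y h
    have h2 := hTa y x h.symm
    have hmul : (n:ℝ) * (π x * aa x y) = (n:ℝ) * (π y * aa y x) := by
      calc (n:ℝ) * (π x * aa x y) = π x * ((n:ℝ) * aa x y) := by ring
        _ = π y * ((n:ℝ) * aa y x) := by rw [h1, h2]; ring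
        _ = (n:ℝ) * (π y * aa y x) := by ring
    exact mul_left_cancel₀ hne hmul
  have hAgen : IsGen (rowZero aa) := isGen_rowZero aa fun x y h => (haapos x y h).le
  have hArev : IsRev π (rowZero aa) := by
    refine ⟨hAgen, fun x y => ?_⟩
    by_cases h : x = y
    · subst h; rfl
    · rw [rowZero_off aa h, rowZero_off aa (Ne.symm h)]
      exact hreva x y h
  have e2 : ∀ (N : X → X → ℝ), (∀ x y, x ≠ y → 0 < N x y) → ∀ x y, x ≠ y →
      ∑ i, N x y * fKL (L i x y / N x y)
        = (∑ i, L i x y * Real.log (L i x y))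
          - (∑ i, L i x y) * Real.log (N x y) - (∑ i, L i x y)
          + (n : ℝ) * N x y := by
    intro N hN x y h
    rw [Finset.sum_congr rfl fun i _ => fKL_expand (hLpos i x y h).le (hN x y h)]
    simp only [Finset.sum_add_distrib, Finset.sum_sub_distrib, Finset.sum_const,
      Finset.card_univ, Fintype.card_fin, nsmul_eq_mul, ← Finset.sum_mul]
    all_goals ring
  have keyB : ∀ M, IsRev π M → (∀ x y, x ≠ y → 0 < M x y) →
      ∑ i, Df fKL π (L i) M
        = (∑ i, Df fKL π (L i) (rowZero aa))
          + ∑ x, ∑ y ∈ Finset.univ.erase x,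
              π x * ((n : ℝ) * (M x y * fKL (aa x y / M x y))) := by
    intro M hM hMp
    rw [Df_swap', Df_swap']
    have step : ∑ x, ∑ y ∈ Finset.univ.erase x,
          π x * ∑ i, rowZero aa x y * fKL (L i x y / rowZero aa x y)
        = ∑ x, ∑ y ∈ Finset.univ.erase x,
          π x * ∑ i, aa x y * fKL (L i x y / aa x y) :=
      Finset.sum_congr rfl fun x _ => Finset.sum_congr rfl fun y hy => by
        rw [rowZero_off aa (Finset.ne_of_mem_erase hy).symm]
    rw [step]
    simp only [← Finset.sum_add_distrib]
    refine offdiag_sum_eq _ _ ?_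
    intro x y hxy
    have pe : ∀ x y, x ≠ y →
        π x * ∑ i, M x y * fKL (L i x y / M x y)
          - (π x * ∑ i, aa x y * fKL (L i x y / aa x y)
             + π x * ((n : ℝ) * (M x y * fKL (aa x y / M x y))))
        = π x * (((∑ i, L i x y) - (n : ℝ) * aa x y)
            * (Real.log (aa x y) - Real.log (M x y))) := by
      intro x y h
      rw [e2 M hMp x y h, e2 aa haapos x y h,
          fKL_expand (haapos x y h).le (hMp x y h)]
      ring
    rw [pe x y hxy, pe y x hxy.symm]
    have hw : Real.log (aa y x) - Real.log (M y x)
        = Real.log (aa x y) - Real.log (M x y) := by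
      have ha' : aa y x = π x * aa x y / π y := by
        rw [eq_div_iff (hπp y).ne']
        linear_combination - hreva x y hxy
      have hm' : M y x = π x * M x y / π y := by
        rw [eq_div_iff (hπp y).ne']
        linear_combination - hM.2 x y
      rw [ha', hm',
        Real.log_div (mul_pos (hπp x) (haapos x y hxy)).ne' (hπp y).ne',
        Real.log_div (mul_pos (hπp x) (hMp x y hxy)).ne' (hπp y).ne',
        Real.log_mul (hπp x).ne' (haapos x y hxy).ne',
        Real.log_mul (hπp x).ne' (hMp x y hxy).ne']
      ring
    rw [hw]
    have h1 := hTa x y hxy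
    have h2 := hTa y x hxy.symm
    linear_combination (Real.log (M x y) - Real.log (aa x y)) * h1
      + (Real.log (M x y) - Real.log (aa x y)) * h2
  have RnnB : ∀ M : X → X → ℝ, (∀ x y, x ≠ y → 0 < M x y) →
      (0:ℝ) ≤ ∑ x, ∑ y ∈ Finset.univ.erase x,
          π x * ((n : ℝ) * (M x y * fKL (aa x y / M x y))) := by
    intro M hMp
    refine Finset.sum_nonneg fun x _ => Finset.sum_nonneg fun y hy => ?_
    have hxy : x ≠ y := (Finset.ne_of_mem_erase hy).symm
    have := fKL_nonneg (div_nonneg (haapos x y hxy).le (hMp x y hxy).le)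
    have := (hMp x y hxy).le
    have := (hπp x).le
    positivity
  refine ⟨⟨hCrev, fun x y h => hentryA x y h, ?_, ?_⟩,
    ⟨⟨hArev, fun x y h => hentryB x y h, fun x y h => by
        rw [rowZero_off aa h]; exact haapos x y h⟩, ?_, ?_⟩⟩
  · intro M hM
    rw [keyA M hM]
    exact le_add_of_nonneg_right (Rnn M hM.1.1)
  · intro M hM heq
    have hk := keyA M hM
    rw [heq] at hk
    have hR : ∑ x, ∑ y ∈ Finset.univ.erase x,
        π x * ((n : ℝ) * (c x y * fKL (M x y / c x y))) = 0 := by linarith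
    have hin : ∀ x ∈ Finset.univ, (0:ℝ) ≤ ∑ y ∈ Finset.univ.erase x,
        π x * ((n : ℝ) * (c x y * fKL (M x y / c x y))) := by
      intro x _
      refine Finset.sum_nonneg fun y hy => ?_
      have hxy : x ≠ y := (Finset.ne_of_mem_erase hy).symm
      have := fKL_nonneg (div_nonneg (hM.1.1 x y hxy) (hcpos x y hxy).le)
      have := (hcpos x y hxy).le
      have := (hπp x).le
      positivity
    have hx0 := (Finset.sum_eq_zero_iff_of_nonneg hin).mp hR
    refine eq_rowZero_of_offdiag hM.1 fun x y hxy => ?_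
    have hy0 : ∀ y ∈ Finset.univ.erase x,
        (0:ℝ) ≤ π x * ((n : ℝ) * (c x y * fKL (M x y / c x y))) := by
      intro y hy
      have hxy : x ≠ y := (Finset.ne_of_mem_erase hy).symm
      have := fKL_nonneg (div_nonneg (hM.1.1 x y hxy) (hcpos x y hxy).le)
      have := (hcpos x y hxy).le
      have := (hπp x).le
      positivity
    have ht := (Finset.sum_eq_zero_iff_of_nonneg hy0).mp
      (hx0 x (Finset.mem_univ x)) y (Finset.mem_erase.mpr ⟨hxy.symm, Finset.mem_univ y⟩)
    have hf0 : fKL (M x y / c x y) = 0 := by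
      have h1 := (hπp x).ne'
      have h2 := (hcpos x y hxy).ne'
      simpa [h1, h2, hne] using ht
    have hd1 : M x y / c x y = 1 := by
      by_contra hne1
      exact (fKL_pos (div_nonneg (hM.1.1 x y hxy) (hcpos x y hxy).le) hne1).ne' hf0
    have := (div_eq_one_iff_eq (hcpos x y hxy).ne').mp hd1
    exact this
  · intro M hM hMp
    rw [keyB M hM hMp]
    exact le_add_of_nonneg_right (RnnB M hMp)
  · intro M hM hMp heq
    have hk := keyB M hM hMp
    rw [heq] at hk
    have hR : ∑ x, ∑ y ∈ Finset.univ.erase x,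
        π x * ((n : ℝ) * (M x y * fKL (aa x y / M x y))) = 0 := by linarith
    have hin : ∀ x ∈ Finset.univ, (0:ℝ) ≤ ∑ y ∈ Finset.univ.erase x,
        π x * ((n : ℝ) * (M x y * fKL (aa x y / M x y))) := by
      intro x _
      refine Finset.sum_nonneg fun y hy => ?_
      have hxy : x ≠ y := (Finset.ne_of_mem_erase hy).symm
      have := fKL_nonneg (div_nonneg (haapos x y hxy).le (hMp x y hxy).le)
      have := (hMp x y hxy).le
      have := (hπp x).le
      positivity
    have hx0 := (Finset.sum_eq_zero_iff_of_nonneg hin).mp hR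
    refine eq_rowZero_of_offdiag hM.1 fun x y hxy => ?_
    have hy0 : ∀ y ∈ Finset.univ.erase x,
        (0:ℝ) ≤ π x * ((n : ℝ) * (M x y * fKL (aa x y / M x y))) := by
      intro y hy
      have hxy : x ≠ y := (Finset.ne_of_mem_erase hy).symm
      have := fKL_nonneg (div_nonneg (haapos x y hxy).le (hMp x y hxy).le)
      have := (hMp x y hxy).le
      have := (hπp x).le
      positivity
    have ht := (Finset.sum_eq_zero_iff_of_nonneg hy0).mp
      (hx0 x (Finset.mem_univ x)) y (Finset.mem_erase.mpr ⟨hxy.symm, Finset.mem_univ y⟩)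
    have hf0 : fKL (aa x y / M x y) = 0 := by
      have h1 := (hπp x).ne'
      have h2 := (hMp x y hxy).ne'
      simpa [h1, h2, hne] using ht
    have hd1 : aa x y / M x y = 1 := by
      by_contra hne1
      exact (fKL_pos (div_nonneg (haapos x y hxy).le (hMp x y hxy).le) hne1).ne' hf0
    exact ((div_eq_one_iff_eq (hMp x y hxy).ne').mp hd1).symm

end
end
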